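/- Let u ∈ ℝ^m, let S = {v_1, …, v_k} be a finite set of unit vectors in ℝ^m, and let T be a finite set of vectors in ℝ^m with f_u(S) ≥ f_u(T) and f_u(S) > 0. Then Σ_{i=1}^k ( f_u(T ∪ {v_i}) − f_u(T) ) ≥ σ_min(S)·(f_u(S) − f_u(T))² / (4·f_u(S)). -/

import Mathlib

open scoped RealInnerProductSpace

attribute [local instance] Classical.decEq

noncomputable def fVec {m : ℕ} (u : EuclideanSpace ℝ (Fin m))
    (S : Finset (EuclideanSpace ℝ (Fin m))) : ℝ :=
  ‖(Submodule.orthogonalProjectionOnto (Submodule.span ℝ (S : Set (EuclideanSpace ℝ (Fin m)))) u :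
      EuclideanSpace ℝ (Fin m))‖ ^ 2

noncomputable def fMat {m n : ℕ} (A : Fin n → EuclideanSpace ℝ (Fin m))
    (S : Finset (EuclideanSpace ℝ (Fin m))) : ℝ :=
  ∑ j, fVec (A j) S

noncomputable def sigmaMin {m : ℕ} (S : Finset (EuclideanSpace ℝ (Fin m))) : ℝ :=
  sInf {r : ℝ | ∃ α : S → ℝ, ∑ v, (α v) ^ 2 = 1 ∧
    r = ‖∑ v, α v • (v : EuclideanSpace ℝ (Fin m))‖ ^ 2}

noncomputable def sigmaMax {m : ℕ} (S : Finset (EuclideanSpace ℝ (Fin m))) : ℝ :=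
  sSup {r : ℝ | ∃ α : S → ℝ, ∑ v, (α v) ^ 2 = 1 ∧
    r = ‖∑ v, α v • (v : EuclideanSpace ℝ (Fin m))‖ ^ 2}

def IsGreedySeq {m nA nB : ℕ} (A : Fin nA → EuclideanSpace ℝ (Fin m))
    (B : Fin nB → EuclideanSpace ℝ (Fin m))
    (T : ℕ → Finset (EuclideanSpace ℝ (Fin m))) (b : ℕ → Fin nB) : Prop :=
  T 0 = ∅ ∧ ∀ i, T (i + 1) = insert (B (b i)) (T i) ∧
    ∀ j, fMat A (insert (B j) (T i)) ≤ fMat A (insert (B (b i)) (T i))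

/-! Let `r = u - Π_T u`. By Pythagoras, adding a vector `v` with `‖v‖ ≤ 1` to `T` gains
`‖Π_{T ∪ {v}} u - Π_T u‖²`, which is at least `⟪r, v⟫²` since `r` and
`Π_{T ∪ {v}} u - Π_T u` have the same inner product with `v ∈ span (T ∪ {v})`. For `v ∈ S` we
have `⟪r, v⟫ = ⟪Π_S r, v⟫`, and writing `Π_S r = ∑ β_v v`, Cauchy–Schwarz together with
`σ_min(S) ∑ β_v² ≤ ‖Π_S r‖²` gives `∑_{v ∈ S} ⟪Π_S r, v⟫² ≥ σ_min(S) ‖Π_S r‖²`. Finally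
`‖Π_S r‖ ≥ ‖Π_S u‖ - ‖Π_T u‖`, and `(a - b)² ≥ (a² - b²)² / (4 a²)` for `0 ≤ b ≤ a`. -/

section Projection

variable {E : Type*} [NormedAddCommGroup E] [InnerProductSpace ℝ E]

theorem Submodule.norm_starProjection_sq_eq_add_of_le {K K' : Submodule ℝ E}
    [K.HasOrthogonalProjection] [K'.HasOrthogonalProjection] (h : K ≤ K') (u : E) :
    ‖K'.starProjection u‖ ^ 2 =
      ‖K.starProjection u‖ ^ 2 + ‖K'.starProjection u - K.starProjection u‖ ^ 2 := by
  have hcomp : K.starProjection (K'.starProjection u) = K.starProjection u :=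
    DFunLike.congr_fun (starProjection_comp_starProjection_of_le h) u
  simpa [hcomp] using norm_sq_eq_add_norm_sq_starProjection (K'.starProjection u) K

theorem Submodule.inner_sub_starProjection_sq_le {K K' : Submodule ℝ E}
    [K.HasOrthogonalProjection] [K'.HasOrthogonalProjection] (h : K ≤ K') (u : E) {v : E}
    (hv : v ∈ K') (hv₁ : ‖v‖ ≤ 1) :
    ⟪u - K.starProjection u, v⟫ ^ 2 ≤ ‖K'.starProjection u‖ ^ 2 - ‖K.starProjection u‖ ^ 2 := by
  set d := K'.starProjection u - K.starProjection u
  have hinner : ⟪u - K.starProjection u, v⟫ = ⟪d, v⟫ := by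
    have := K'.starProjection_inner_eq_zero u v hv
    simp only [d, inner_sub_left] at this ⊢
    linarith
  have hcs : |⟪d, v⟫| ≤ ‖d‖ :=
    (abs_real_inner_le_norm d v).trans (mul_le_of_le_one_right (norm_nonneg d) hv₁)
  rw [norm_starProjection_sq_eq_add_of_le h u, hinner, add_sub_cancel_left]
  exact sq_le_sq.mpr (by rwa [abs_norm])

end Projection

section Euclidean

variable {m : ℕ}

theorem fVec_eq_norm_starProjection_sq (u : EuclideanSpace ℝ (Fin m))
    (S : Finset (EuclideanSpace ℝ (Fin m))) :
    fVec u S = ‖(Submodule.span ℝ (S : Set (EuclideanSpace ℝ (Fin m)))).starProjection u‖ ^ 2 :=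
  rfl

theorem inner_sq_le_fVec_insert_sub_fVec (u : EuclideanSpace ℝ (Fin m))
    {v : EuclideanSpace ℝ (Fin m)} (T : Finset (EuclideanSpace ℝ (Fin m))) (hv : ‖v‖ ≤ 1) :
    ⟪u - (Submodule.span ℝ (T : Set (EuclideanSpace ℝ (Fin m)))).starProjection u, v⟫ ^ 2 ≤
      fVec u (insert v T) - fVec u T :=
  Submodule.inner_sub_starProjection_sq_le (Submodule.span_mono (by simp)) u
    (Submodule.subset_span (by simp)) hv

theorem sigmaMin_nonneg (S : Finset (EuclideanSpace ℝ (Fin m))) : 0 ≤ sigmaMin S :=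
  Real.sInf_nonneg (by rintro r ⟨α, -, rfl⟩; positivity)

theorem sigmaMin_mul_sum_sq_le (S : Finset (EuclideanSpace ℝ (Fin m)))
    (β : EuclideanSpace ℝ (Fin m) → ℝ) :
    sigmaMin S * ∑ v ∈ S, β v ^ 2 ≤ ‖∑ v ∈ S, β v • v‖ ^ 2 := by
  set B := ∑ v ∈ S, β v ^ 2
  have hB₀ : 0 ≤ B := Finset.sum_nonneg fun v _ => sq_nonneg (β v)
  rcases hB₀.eq_or_lt with hB | hB
  · rw [← hB, mul_zero]
    positivity
  have hsqrt : 0 < √B := Real.sqrt_pos.mpr hB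
  have hmem : ‖∑ v ∈ S, β v • v‖ ^ 2 / B ∈ {r : ℝ | ∃ α : S → ℝ, ∑ v, (α v) ^ 2 = 1 ∧
      r = ‖∑ v, α v • (v : EuclideanSpace ℝ (Fin m))‖ ^ 2} := by
    refine ⟨fun v => β v / √B, ?_, ?_⟩
    · rw [Finset.sum_coe_sort S fun v => (β v / √B) ^ 2]
      simp only [div_pow, Real.sq_sqrt hB.le, ← Finset.sum_div]
      exact div_self hB.ne'
    · rw [Finset.sum_coe_sort S fun v => (β v / √B) • v]
      simp only [div_eq_inv_mul, ← smul_smul, ← Finset.smul_sum, norm_smul, mul_pow, norm_inv,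
        Real.norm_of_nonneg hsqrt.le, inv_pow, Real.sq_sqrt hB.le]
  have hbdd : BddBelow {r : ℝ | ∃ α : S → ℝ, ∑ v, (α v) ^ 2 = 1 ∧
      r = ‖∑ v, α v • (v : EuclideanSpace ℝ (Fin m))‖ ^ 2} :=
    ⟨0, by rintro r ⟨α, -, rfl⟩; positivity⟩
  exact (le_div_iff₀ hB).mp (csInf_le hbdd hmem)

theorem sigmaMin_mul_norm_sq_le_sum_inner_sq (S : Finset (EuclideanSpace ℝ (Fin m)))
    {w : EuclideanSpace ℝ (Fin m)}
    (hw : w ∈ Submodule.span ℝ (S : Set (EuclideanSpace ℝ (Fin m)))) :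
    sigmaMin S * ‖w‖ ^ 2 ≤ ∑ v ∈ S, ⟪w, v⟫ ^ 2 := by
  obtain ⟨β, -, hβ⟩ := Submodule.mem_span_finset.mp hw
  set Q := ∑ v ∈ S, ⟪w, v⟫ ^ 2
  have hQ : 0 ≤ Q := Finset.sum_nonneg fun v _ => sq_nonneg _
  have hexpand : ‖w‖ ^ 2 = ∑ v ∈ S, β v * ⟪w, v⟫ := by
    rw [← real_inner_self_eq_norm_sq]
    nth_rewrite 2 [← hβ]
    simp only [inner_sum, real_inner_smul_right]
  have hcs : (‖w‖ ^ 2) ^ 2 ≤ (∑ v ∈ S, β v ^ 2) * Q :=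
    hexpand ▸ Finset.sum_mul_sq_le_sq_mul_sq S β fun v => ⟪w, v⟫
  rcases (sq_nonneg ‖w‖).eq_or_lt with hw0 | hw0
  · rw [← hw0, mul_zero]
    exact hQ
  refine le_of_mul_le_mul_right ?_ hw0
  calc sigmaMin S * ‖w‖ ^ 2 * ‖w‖ ^ 2 = sigmaMin S * (‖w‖ ^ 2) ^ 2 := by ring
    _ ≤ sigmaMin S * ((∑ v ∈ S, β v ^ 2) * Q) :=
      mul_le_mul_of_nonneg_left hcs (sigmaMin_nonneg S)
    _ = (sigmaMin S * ∑ v ∈ S, β v ^ 2) * Q := by ring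
    _ ≤ ‖w‖ ^ 2 * Q := mul_le_mul_of_nonneg_right (hβ ▸ sigmaMin_mul_sum_sq_le S β) hQ
    _ = Q * ‖w‖ ^ 2 := mul_comm _ _

end Euclidean

theorem sq_sub_sq_sq_div_le_sq_sub {a b : ℝ} (hb : 0 ≤ b) (hba : b ≤ a) :
    (a ^ 2 - b ^ 2) ^ 2 / (4 * a ^ 2) ≤ (a - b) ^ 2 := by
  refine div_le_of_le_mul₀ (by positivity) (sq_nonneg _) ?_
  have hsum : (a + b) ^ 2 ≤ 4 * a ^ 2 := by nlinarith
  calc (a ^ 2 - b ^ 2) ^ 2 = (a - b) ^ 2 * (a + b) ^ 2 := by ring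
    _ ≤ (a - b) ^ 2 * (4 * a ^ 2) := mul_le_mul_of_nonneg_left hsum (sq_nonneg _)

theorem sum_marginal_gain_single_vector_general {m : ℕ}
    (u : EuclideanSpace ℝ (Fin m))
    (S T : Finset (EuclideanSpace ℝ (Fin m)))
    (hSunit : ∀ v ∈ S, ‖v‖ = 1)
    (hST : fVec u T ≤ fVec u S) :
    sigmaMin S * (fVec u S - fVec u T) ^ 2 / (4 * fVec u S) ≤
      ∑ v ∈ S, (fVec u (insert v T) - fVec u T) := by
  set KS := Submodule.span ℝ (S : Set (EuclideanSpace ℝ (Fin m)))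
  set KT := Submodule.span ℝ (T : Set (EuclideanSpace ℝ (Fin m)))
  set w := KS.starProjection (u - KT.starProjection u)
  have hgain : ∀ v ∈ S, ⟪w, v⟫ ^ 2 ≤ fVec u (insert v T) - fVec u T := fun v hv => by
    rw [Submodule.inner_starProjection_left_eq_right,
      KS.starProjection_eq_self_iff.mpr (Submodule.subset_span hv)]
    exact inner_sq_le_fVec_insert_sub_fVec u T (hSunit v hv).le
  rw [fVec_eq_norm_starProjection_sq, fVec_eq_norm_starProjection_sq] at hST ⊢
  set a := ‖KS.starProjection u‖
  set b := ‖KT.starProjection u‖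
  have hba : b ≤ a := (sq_le_sq₀ (norm_nonneg _) (norm_nonneg _)).mp hST
  have hw : a - b ≤ ‖w‖ := by
    have := norm_sub_norm_le (KS.starProjection u) (KS.starProjection (KT.starProjection u))
    rw [← map_sub] at this
    linarith [KS.norm_starProjection_apply_le (KT.starProjection u)]
  have hσ := sigmaMin_nonneg S
  calc sigmaMin S * (a ^ 2 - b ^ 2) ^ 2 / (4 * a ^ 2)
      = sigmaMin S * ((a ^ 2 - b ^ 2) ^ 2 / (4 * a ^ 2)) := mul_div_assoc _ _ _
    _ ≤ sigmaMin S * (a - b) ^ 2 := by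
      gcongr
      exact sq_sub_sq_sq_div_le_sq_sub (norm_nonneg _) hba
    _ ≤ sigmaMin S * ‖w‖ ^ 2 := by gcongr
    _ ≤ ∑ v ∈ S, ⟪w, v⟫ ^ 2 :=
      sigmaMin_mul_norm_sq_le_sum_inner_sq S (KS.starProjection_apply_mem _)
    _ ≤ ∑ v ∈ S, (fVec u (insert v T) - fVec u T) := Finset.sum_le_sum hgain

/-- Single-vector version of the large marginal gain lemma. -/
theorem sum_marginal_gain_single_vector {m : ℕ}
    (u : EuclideanSpace ℝ (Fin m))
    (S T : Finset (EuclideanSpace ℝ (Fin m)))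
    (hSunit : ∀ v ∈ S, ‖v‖ = 1)
    (hST : fVec u T ≤ fVec u S) (hS0 : 0 < fVec u S) :
    sigmaMin S * (fVec u S - fVec u T) ^ 2 / (4 * fVec u S) ≤
      ∑ v ∈ S, (fVec u (insert v T) - fVec u T) :=
  sum_marginal_gain_single_vector_general u S T hSunit hST
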